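/- arXiv:2107.05454 — 2 statements merged into one kernel-verified Lean document; each statement's English description precedes it below -/
import Mathlib

section
/- Every maximal planar graph of minimum degree 5 contains either two adjacent vertices of degree 5, or a vertex of degree 5 adjacent to a vertex of degree 6 (Wernicke's theorem). -/
/-- A combinatorial plane triangulation (maximal planar graph): a connected simple
graph together with a collection of triangular faces, each being a 3-clique, such
that every edge lies on exactly two faces, satisfying Euler's formula `n - m + f = 2`. -/
def IsPlaneTriangulation {V : Type*} [Fintype V] [DecidableEq V]
    (G : SimpleGraph V) [DecidableRel G.Adj] : Prop :=
  G.Connected ∧ ∃ F : Finset (Finset V),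
    (∀ t ∈ F, t.card = 3 ∧ ∀ x ∈ t, ∀ y ∈ t, x ≠ y → G.Adj x y) ∧
    (∀ e ∈ G.edgeFinset, ∃ t₁ ∈ F, ∃ t₂ ∈ F, t₁ ≠ t₂ ∧
      (∀ x ∈ e, x ∈ t₁) ∧ (∀ x ∈ e, x ∈ t₂) ∧
      ∀ t ∈ F, (∀ x ∈ e, x ∈ t) → t = t₁ ∨ t = t₂) ∧
    ((Fintype.card V : ℤ) - (G.edgeFinset.card : ℤ) + (F.card : ℤ) = 2)

/-!
Discharging. Give every vertex `v` the charge `deg v - 6`; by Euler's formula the charges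
sum to `-12`. Each vertex sends its charge in equal parts `1 - 6 / deg v` to the `deg v`
faces around it. If there is no 55- or 56-configuration, a face with a vertex of degree 5
has its two other vertices of degree at least 7 and so receives at least
`-1/5 + 2/7 > 0`, while every other face receives a nonnegative amount: the total charge
is nonnegative, a contradiction.
-/

open Finset

namespace SimpleGraph

variable {V : Type*} [DecidableEq V] (G : SimpleGraph V)

structure IsTriangleFaceSet (F : Finset (Finset V)) : Prop where
  card_eq_three : ∀ t ∈ F, #t = 3
  isClique : ∀ t ∈ F, G.IsClique (t : Set V)
  card_filter_adj : ∀ u v, G.Adj u v → #{t ∈ F | u ∈ t ∧ v ∈ t} = 2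

variable {G}

theorem filter_neighborFinset_mem_of_isClique {v : V} [Fintype (G.neighborSet v)] {t : Finset V}
    (ht : G.IsClique (t : Set V)) (hv : v ∈ t) :
    {w ∈ G.neighborFinset v | w ∈ t} = t.erase v := by
  ext w
  simp only [mem_filter, mem_neighborFinset, mem_erase]
  exact ⟨fun ⟨hvw, hw⟩ => ⟨hvw.ne', hw⟩, fun ⟨hwv, hw⟩ => ⟨ht hv hw hwv.symm, hw⟩⟩

namespace IsTriangleFaceSet

variable [Fintype V] [DecidableRel G.Adj] {F : Finset (Finset V)}

theorem card_filter_mem (hF : G.IsTriangleFaceSet F) (v : V) :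
    #{t ∈ F | v ∈ t} = G.degree v := by
  have h := card_mul_eq_card_mul (s := {t ∈ F | v ∈ t}) (t := G.neighborFinset v)
    (fun t w => w ∈ t) (m := 2) (n := 2) ?_ ?_
  · rwa [card_neighborFinset_eq_degree, Nat.mul_left_inj two_ne_zero] at h
  · intro t ht
    obtain ⟨htF, hvt⟩ := mem_filter.1 ht
    rw [bipartiteAbove, filter_neighborFinset_mem_of_isClique (hF.isClique t htF) hvt,
      card_erase_of_mem hvt, hF.card_eq_three t htF]
  · intro w hw
    rw [bipartiteBelow, filter_filter]
    exact hF.card_filter_adj v w ((G.mem_neighborFinset v w).1 hw)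

theorem sum_sum_eq_sum_degree_smul {M : Type*} [AddCommMonoid M] (hF : G.IsTriangleFaceSet F)
    (f : V → M) : ∑ t ∈ F, ∑ v ∈ t, f v = ∑ v, G.degree v • f v := by
  rw [sum_comm' (t' := univ) (s' := fun v => {t ∈ F | v ∈ t}) (by simp)]
  simp only [sum_const, hF.card_filter_mem]

theorem three_mul_card (hF : G.IsTriangleFaceSet F) : 3 * #F = 2 * #G.edgeFinset := by
  have h := hF.sum_sum_eq_sum_degree_smul (fun _ => 1)
  simp only [sum_const, smul_eq_mul, mul_one, sum_degrees_eq_twice_card_edges] at h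
  rw [← h, sum_congr rfl hF.card_eq_three, sum_const, smul_eq_mul, mul_comm]

theorem sum_degree_sub_six (hF : G.IsTriangleFaceSet F)
    (heuler : (Fintype.card V : ℤ) - #G.edgeFinset + #F = 2) :
    ∑ v, ((G.degree v : ℚ) - 6) = -12 := by
  have hdeg : ∑ v, (G.degree v : ℚ) = 2 * #G.edgeFinset := by
    exact_mod_cast G.sum_degrees_eq_twice_card_edges
  have h32 : (3 : ℚ) * #F = 2 * #G.edgeFinset := by exact_mod_cast hF.three_mul_card
  have heuler' : (Fintype.card V : ℚ) - #G.edgeFinset + #F = 2 := by exact_mod_cast heuler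
  rw [sum_sub_distrib, hdeg, sum_const, card_univ, nsmul_eq_mul]
  linarith

end IsTriangleFaceSet

theorem sum_one_sub_six_div_degree_nonneg [Fintype V] [DecidableRel G.Adj] {t : Finset V}
    (ht : G.IsClique (t : Set V)) (ht3 : 3 ≤ #t) (hmin : ∀ v, 5 ≤ G.degree v)
    (h57 : ∀ u v, G.Adj u v → G.degree u = 5 → 7 ≤ G.degree v) :
    0 ≤ ∑ v ∈ t, (1 - 6 / (G.degree v : ℚ)) := by
  by_cases h5 : ∃ u ∈ t, G.degree u = 5
  · obtain ⟨u, hut, hu⟩ := h5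
    have hrest : ∀ v ∈ t.erase u, (1 / 7 : ℚ) ≤ 1 - 6 / G.degree v := by
      intro v hv
      have h7 : (7 : ℚ) ≤ G.degree v := by
        exact_mod_cast h57 u v (ht hut (mem_of_mem_erase hv) (ne_of_mem_erase hv).symm) hu
      have : 6 / (G.degree v : ℚ) ≤ 6 / 7 := by gcongr
      linarith
    have hcard : 2 ≤ #(t.erase u) := by rw [card_erase_of_mem hut]; omega
    rw [← add_sum_erase t _ hut]
    calc (0 : ℚ) ≤ (1 - 6 / 5) + (2 : ℕ) • (1 / 7) := by norm_num
      _ ≤ (1 - 6 / G.degree u) + #(t.erase u) • (1 / 7) := by rw [hu]; gcongr; norm_num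
      _ ≤ (1 - 6 / G.degree u) + ∑ v ∈ t.erase u, (1 - 6 / (G.degree v : ℚ)) := by
        gcongr; exact card_nsmul_le_sum _ _ _ hrest
  · refine sum_nonneg fun v hv => ?_
    have h6 : 6 ≤ G.degree v := by
      have hv5 : G.degree v ≠ 5 := fun h => h5 ⟨v, hv, h⟩
      have := hmin v
      omega
    rw [sub_nonneg, div_le_one (by positivity)]
    exact_mod_cast h6

end SimpleGraph

open SimpleGraph

theorem IsPlaneTriangulation.exists_isTriangleFaceSet {V : Type*} [Fintype V] [DecidableEq V]
    {G : SimpleGraph V} [DecidableRel G.Adj] (h : IsPlaneTriangulation G) :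
    ∃ F, G.IsTriangleFaceSet F ∧ (Fintype.card V : ℤ) - #G.edgeFinset + #F = 2 := by
  obtain ⟨-, F, hfaces, hedges, heuler⟩ := h
  refine ⟨F, ⟨fun t ht => (hfaces t ht).1, fun t ht x hx y hy => (hfaces t ht).2 x hx y hy,
    fun u v huv => ?_⟩, heuler⟩
  obtain ⟨t₁, ht₁, t₂, ht₂, hne, h₁, h₂, huniq⟩ := hedges s(u, v) (mem_edgeFinset.2 huv)
  simp only [Sym2.mem_iff, forall_eq_or_imp, forall_eq] at h₁ h₂ huniq
  rw [show {t ∈ F | u ∈ t ∧ v ∈ t} = {t₁, t₂} by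
    ext t
    simp only [mem_filter, mem_insert, mem_singleton]
    exact ⟨fun ⟨htF, hut, hvt⟩ => huniq t htF ⟨hut, hvt⟩, by rintro (rfl | rfl) <;> tauto⟩]
  exact card_pair hne

/-- Wernicke's theorem: every maximal planar graph of minimum degree 5 contains
an edge joining two degree-5 vertices (a 55-configuration) or an edge joining a
degree-5 vertex to a degree-6 vertex (a 56-configuration). -/
theorem wernicke {V : Type*} [Fintype V] [DecidableEq V]
    (G : SimpleGraph V) [DecidableRel G.Adj]
    (htri : IsPlaneTriangulation G) (hmin : G.minDegree = 5) :
    ∃ u v : V, G.Adj u v ∧ G.degree u = 5 ∧ (G.degree v = 5 ∨ G.degree v = 6) := by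
  obtain ⟨F, hF, heuler⟩ := htri.exists_isTriangleFaceSet
  by_contra! hno
  have hdeg : ∀ v, 5 ≤ G.degree v := fun v => hmin ▸ G.minDegree_le_degree v
  have h57 : ∀ u v, G.Adj u v → G.degree u = 5 → 7 ≤ G.degree v := fun u v huv hu => by
    have := hno u v huv hu; have := hdeg v; omega
  have hfaces : 0 ≤ ∑ t ∈ F, ∑ v ∈ t, (1 - 6 / (G.degree v : ℚ)) := sum_nonneg fun t ht =>
    sum_one_sub_six_div_degree_nonneg (hF.isClique t ht) (hF.card_eq_three t ht).ge hdeg h57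
  have hvertices : ∑ v, G.degree v • (1 - 6 / (G.degree v : ℚ)) = ∑ v, ((G.degree v : ℚ) - 6) :=
    sum_congr rfl fun v _ => by
      have : (G.degree v : ℚ) ≠ 0 := by have := hdeg v; positivity
      rw [nsmul_eq_mul, mul_sub, mul_one, mul_div_cancel₀ _ this]
  rw [hF.sum_sum_eq_sum_degree_smul, hvertices, hF.sum_degree_sub_six heuler] at hfaces
  norm_num at hfaces
end

section
/- Let G be a plane triangulation, v a vertex of degree 5 with wheel neighborhood cycle C₅ = u v₃ v₄ v₁ v₅ u, and f a proper 4-coloring of G − v under which C₅ receives all four colors, say f(u)=1, f(v₃)=f(v₅)=2, f(v₄)=3, f(v₁)=4. If u and v₁ lie in different 14-components of f, then G is properly 4-colorable. -/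
/-!
Swap colors 1 and 4 on the 14-component of `u` in the coloring of `G - v`. This is again a
proper coloring; `u` now gets color 4, `v₁` keeps color 4 because it lies in another
component, and `v₃, v₄, v₅` keep colors 2, 3, 2 because the swap fixes them. So no neighbor
of `v` has color 1 any more, and `v` can be colored 1.
-/

namespace SimpleGraph.Coloring

variable {V α : Type*} {G : SimpleGraph V}

/-- Contains `x` whatever its color. -/
def kempeChain (C : G.Coloring α) (c d : α) (x : V) : Set V :=
  {y | Relation.ReflTransGen
    (fun a b => G.Adj a b ∧ (C a = c ∨ C a = d) ∧ (C b = c ∨ C b = d)) x y}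

section KempeChain

variable (C : G.Coloring α) {c d : α} {x a b : V}

theorem self_mem_kempeChain : x ∈ C.kempeChain c d x :=
  Relation.ReflTransGen.refl

theorem mem_kempeChain_of_adj_of_swap_eq [DecidableEq α] (ha : a ∈ C.kempeChain c d x)
    (hab : G.Adj a b) (h : Equiv.swap c d (C a) = C b) : b ∈ C.kempeChain c d x := by
  by_cases hca : C a = c ∨ C a = d
  · have hcb : C b = c ∨ C b = d := by
      rcases hca with hca | hca <;> simp [hca, ← h]
    exact ha.tail ⟨hab, hca, hcb⟩
  · push Not at hca
    rw [Equiv.swap_apply_of_ne_of_ne hca.1 hca.2] at h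
    exact absurd h (C.valid hab)

end KempeChain

open Classical in
noncomputable def kempeSwap [DecidableEq α] (C : G.Coloring α) (c d : α) (x : V) :
    G.Coloring α :=
  Coloring.mk (fun y => if y ∈ C.kempeChain c d x then Equiv.swap c d (C y) else C y)
    fun {a b} hab => by
      by_cases ha : a ∈ C.kempeChain c d x <;> by_cases hb : b ∈ C.kempeChain c d x <;>
        simp only [ha, hb, if_true, if_false]
      · exact (Equiv.swap c d).injective.ne (C.valid hab)
      · exact fun h => hb (C.mem_kempeChain_of_adj_of_swap_eq ha hab h)
      · exact fun h => ha (C.mem_kempeChain_of_adj_of_swap_eq hb hab.symm h.symm)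
      · exact C.valid hab

section KempeSwap

variable [DecidableEq α] (C : G.Coloring α) {c d : α} {x y : V}

theorem kempeSwap_apply_of_mem (hy : y ∈ C.kempeChain c d x) :
    C.kempeSwap c d x y = Equiv.swap c d (C y) := by
  classical
  simp [kempeSwap, Coloring.mk, hy]

theorem kempeSwap_apply_of_notMem (hy : y ∉ C.kempeChain c d x) :
    C.kempeSwap c d x y = C y := by
  classical
  simp [kempeSwap, Coloring.mk, hy]

theorem kempeSwap_apply_of_ne_of_ne (hc : C y ≠ c) (hd : C y ≠ d) :
    C.kempeSwap c d x y = C y := by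
  by_cases hy : y ∈ C.kempeChain c d x
  · rw [C.kempeSwap_apply_of_mem hy, Equiv.swap_apply_of_ne_of_ne hc hd]
  · exact C.kempeSwap_apply_of_notMem hy

end KempeSwap

def extendOfDeleteIncidenceSet [DecidableEq V] {v : V}
    (C : (G.deleteIncidenceSet v).Coloring α) (k : α) (hk : ∀ w, G.Adj v w → C w ≠ k) :
    G.Coloring α :=
  Coloring.mk (Function.update C v k) fun {a b} hab => by
    by_cases ha : a = v
    · subst ha
      rw [Function.update_self, Function.update_of_ne hab.ne.symm]
      exact (hk b hab).symm
    by_cases hb : b = v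
    · subst hb
      rw [Function.update_self, Function.update_of_ne hab.ne]
      exact hk a hab.symm
    rw [Function.update_of_ne ha, Function.update_of_ne hb]
    exact C.valid (deleteIncidenceSet_adj.2 ⟨hab, ha, hb⟩)

end SimpleGraph.Coloring

open SimpleGraph Coloring

theorem fiveWheel_kempe_colorable_general {V : Type*}
    (G : SimpleGraph V) (v u v₁ v₃ v₄ v₅ : V)
    (hN : ∀ w, G.Adj v w ↔ (w = u ∨ w = v₃ ∨ w = v₄ ∨ w = v₁ ∨ w = v₅))
    (f : V → Fin 4)
    (hf : ∀ a b, G.Adj a b → a ≠ v → b ≠ v → f a ≠ f b)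
    (hfu : f u = 0) (hf3 : f v₃ = 1) (hf5 : f v₅ = 1) (hf4 : f v₄ = 2)
    (hf1 : f v₁ = 3)
    (hsep : ¬ Relation.ReflTransGen (fun a b => G.Adj a b ∧ a ≠ v ∧ b ≠ v ∧
      (f a = 0 ∨ f a = 3) ∧ (f b = 0 ∨ f b = 3)) u v₁) :
    G.Colorable 4 := by
  classical
  let C : (G.deleteIncidenceSet v).Coloring (Fin 4) :=
    Coloring.mk f fun hab => by
      obtain ⟨hab, ha, hb⟩ := deleteIncidenceSet_adj.1 hab
      exact hf _ _ hab ha hb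
  have hC : ∀ w, C w = f w := fun _ => rfl
  have hv₁ : v₁ ∉ C.kempeChain 0 3 u := by
    simpa [kempeChain, hC, deleteIncidenceSet_adj, and_assoc] using hsep
  have hfree : ∀ w, G.Adj v w → C.kempeSwap 0 3 u w ≠ 0 := by
    intro w hw
    rcases (hN w).1 hw with rfl | rfl | rfl | rfl | rfl
    · rw [C.kempeSwap_apply_of_mem C.self_mem_kempeChain]; simp [hC, hfu]
    · rw [C.kempeSwap_apply_of_ne_of_ne] <;> simp [hC, hf3]
    · rw [C.kempeSwap_apply_of_ne_of_ne] <;> simp [hC, hf4]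
    · rw [C.kempeSwap_apply_of_notMem hv₁]; simp [hC, hf1]
    · rw [C.kempeSwap_apply_of_ne_of_ne] <;> simp [hC, hf5]
  exact ⟨(C.kempeSwap 0 3 u).extendOfDeleteIncidenceSet 0 hfree⟩

/-- Kempe's 5-wheel step: `G` is a plane triangulation, `v` a vertex of degree 5
with wheel cycle `C₅ = u v₃ v₄ v₁ v₅ u`, and `f` a proper 4-coloring of `G - v`
under which `C₅` receives all four colors (`f u = 1`, `f v₃ = f v₅ = 2`,
`f v₄ = 3`, `f v₁ = 4`; colors `1,2,3,4` are `0,1,2,3 : Fin 4`).  If `u` and `v₁`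
lie in different 14-components of `f` (no chain of color-`{1,4}` vertices of
`G - v` joins them), then `G` is properly 4-colorable. -/
theorem fiveWheel_kempe_colorable {V : Type*} [Fintype V] [DecidableEq V]
    (G : SimpleGraph V) [DecidableRel G.Adj]
    (htri : IsPlaneTriangulation G) (v u v₁ v₃ v₄ v₅ : V)
    (hdeg : G.degree v = 5)
    (hN : ∀ w, G.Adj v w ↔ (w = u ∨ w = v₃ ∨ w = v₄ ∨ w = v₁ ∨ w = v₅))
    (hc1 : G.Adj u v₃) (hc2 : G.Adj v₃ v₄) (hc3 : G.Adj v₄ v₁)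
    (hc4 : G.Adj v₁ v₅) (hc5 : G.Adj v₅ u)
    (f : V → Fin 4)
    (hf : ∀ a b, G.Adj a b → a ≠ v → b ≠ v → f a ≠ f b)
    (hfu : f u = 0) (hf3 : f v₃ = 1) (hf5 : f v₅ = 1) (hf4 : f v₄ = 2)
    (hf1 : f v₁ = 3)
    (hsep : ¬ Relation.ReflTransGen (fun a b => G.Adj a b ∧ a ≠ v ∧ b ≠ v ∧
      (f a = 0 ∨ f a = 3) ∧ (f b = 0 ∨ f b = 3)) u v₁) :
    G.Colorable 4 :=
  fiveWheel_kempe_colorable_general G v u v₁ v₃ v₄ v₅ hN f hf hfu hf3 hf5 hf4 hf1 hsep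
end
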